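/- Every finite cubic graph G contains two disjoint 2-packings X and Y such that the induced subgraph on V(G) \ (X ∪ Y) is triangle-free. -/

import Mathlib

def IsCubic {V : Type*} [Fintype V] (G : SimpleGraph V) [DecidableRel G.Adj] : Prop :=
  ∀ v : V, G.degree v = 3

def IsTriangle {V : Type*} (G : SimpleGraph V) (a b c : V) : Prop :=
  G.Adj a b ∧ G.Adj a c ∧ G.Adj b c

def TwoPacking {V : Type*} (G : SimpleGraph V) (S : Set V) : Prop :=
  ∀ u ∈ S, ∀ v ∈ S, u ≠ v → 2 < G.edist u v

/-!
The triangles of a cubic graph are of three kinds: those of a `K₄` component, those of an induced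
diamond (two triangles sharing an edge), and triangle blocks, which share no edge with another
triangle. A `K₄` puts its least vertex into `X` and its greatest into `Y`, and a diamond puts its
smaller apex into `X`; apexes of distinct diamonds are at distance at least three.

Every triangle block contributes one vertex, whose single neighbour outside the block we call its
out-neighbour. Two such vertices at distance at most two either have the out-neighbour of one inside
the block of the other, or share their out-neighbour. Two-colour the blocks by a maximum cut of the
graph in which blocks are adjacent when joined by an edge, so that every non-isolated block has a
neighbour of the other colour, and let such a block send its vertex, into the packing of its colour,
towards that neighbour. Isolated blocks go to `Y`, with pairwise distinct out-neighbours given by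
Hall's theorem. Then neither kind of conflict arises within a colour.
-/

open Finset SimpleGraph

theorem TwoPacking.union {V : Type*} {G : SimpleGraph V} {A B : Set V} (hA : TwoPacking G A)
    (hB : TwoPacking G B) (hAB : ∀ a ∈ A, ∀ b ∈ B, 2 < G.edist a b) : TwoPacking G (A ∪ B) := by
  rintro u (hu | hu) v (hv | hv) huv
  · exact hA u hu v hv huv
  · exact hAB u hu v hv
  · exact G.edist_comm ▸ hAB v hv u hu
  · exact hB u hu v hv huv

section Cubic

variable {V : Type*} [Fintype V] {G : SimpleGraph V} [DecidableRel G.Adj]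

theorem IsCubic.card_neighborFinset (hG : IsCubic G) (v : V) : #(G.neighborFinset v) = 3 := by
  rw [card_neighborFinset_eq_degree, hG v]

theorem IsCubic.adj_iff (hG : IsCubic G) {a b c d : V} (hb : G.Adj a b) (hc : G.Adj a c)
    (hd : G.Adj a d) (hbc : b ≠ c) (hbd : b ≠ d) (hcd : c ≠ d) (x : V) :
    G.Adj a x ↔ x = b ∨ x = c ∨ x = d := by
  classical
  have hsub : ({b, c, d} : Finset V) ⊆ G.neighborFinset a := by
    intro y
    simp only [mem_insert, mem_singleton, mem_neighborFinset]
    rintro (rfl | rfl | rfl) <;> assumption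
  have hcard : #(G.neighborFinset a) ≤ #({b, c, d} : Finset V) := by
    rw [hG.card_neighborFinset, card_eq_three.2 ⟨b, c, d, hbc, hbd, hcd, rfl⟩]
  rw [← mem_neighborFinset, ← eq_of_subset_of_card_le hsub hcard]
  simp

theorem IsCubic.exists_adj_ne (hG : IsCubic G) (a b c : V) : ∃ d, G.Adj a d ∧ d ≠ b ∧ d ≠ c := by
  classical
  by_contra! h
  have hsub : G.neighborFinset a ⊆ {b, c} := by
    intro x hx
    rw [mem_neighborFinset] at hx
    by_cases hxb : x = b
    · simp [hxb]
    · simp [h x hx hxb]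
  have := (card_le_card hsub).trans card_le_two
  rw [hG.card_neighborFinset] at this
  omega

end Cubic

namespace SimpleGraph

variable {V : Type*}

section General

variable (G : SimpleGraph V)

theorem edist_le_two_iff {u v : V} :
    G.edist u v ≤ 2 ↔ u = v ∨ G.Adj u v ∨ ∃ w, G.Adj u w ∧ G.Adj w v := by
  constructor
  · intro h
    obtain ⟨p, hp⟩ := exists_walk_of_edist_ne_top (ne_top_of_le_ne_top (by decide) h)
    have hlen : p.length ≤ 2 := by exact_mod_cast hp ▸ h
    match p, hlen with
    | .nil, _ => exact Or.inl rfl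
    | .cons h₁ .nil, _ => exact Or.inr (Or.inl h₁)
    | .cons h₁ (.cons h₂ .nil), _ => exact Or.inr (Or.inr ⟨_, h₁, h₂⟩)
    | .cons _ (.cons _ (.cons _ _)), hlen => simp at hlen
  · rintro (rfl | h | ⟨w, h₁, h₂⟩)
    · simp
    · rw [edist_eq_one_iff_adj.mpr h]; norm_num
    · calc G.edist u v ≤ G.edist u w + G.edist w v := SimpleGraph.edist_triangle
        _ = 2 := by rw [edist_eq_one_iff_adj.mpr h₁, edist_eq_one_iff_adj.mpr h₂]; rfl

/-- Maximum cut: flipping a vertex all of whose neighbours share its colour strictly decreases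
the set of monochromatic edges. -/
theorem exists_bool_coloring_exists_adj_ne [Finite V] :
    ∃ c : V → Bool, ∀ v w, G.Adj v w → ∃ u, G.Adj v u ∧ c u ≠ c v := by
  classical
  cases nonempty_fintype V
  let mono (c : V → Bool) : Finset (V × V) := {p | G.Adj p.1 p.2 ∧ c p.1 = c p.2}
  obtain ⟨c, -, hc⟩ := univ.exists_min_image (fun c => #(mono c)) univ_nonempty
  refine ⟨c, fun v w hvw => ?_⟩
  by_contra! hv
  let c' := Function.update c v (!c v)
  have hsub : mono c' ⊂ mono c := by
    refine ssubset_iff_of_subset ?_ |>.mpr ⟨(v, w), ?_, ?_⟩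
    · rintro ⟨x, y⟩
      simp only [mono, c', mem_filter, mem_univ, true_and]
      rintro ⟨hxy, hxy'⟩
      refine ⟨hxy, ?_⟩
      rcases eq_or_ne x v with rfl | hx
      · simp [Function.update_of_ne (G.ne_of_adj hxy).symm, hv y hxy] at hxy'
      rcases eq_or_ne y v with rfl | hy
      · simp [Function.update_of_ne hx, hv x hxy.symm] at hxy'
      simpa [Function.update_of_ne hx, Function.update_of_ne hy] using hxy'
    · simp [mono, hvw, hv w hvw]
    · simp [mono, c', Function.update_of_ne (G.ne_of_adj hvw).symm, hv w hvw]
  exact (card_lt_card hsub).not_ge (hc c' (mem_univ _))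

end General

section TriangleBlock

variable (G : SimpleGraph V)

/-- A triangle sharing no edge with another triangle: no outside vertex sees two of its
vertices. -/
def IsTriangleBlock (s : Finset V) : Prop :=
  G.IsNClique 3 s ∧ ∀ z ∉ s, ∀ x ∈ s, ∀ y ∈ s, G.Adj z x → G.Adj z y → x = y

abbrev TriangleBlock : Type _ := {s : Finset V // G.IsTriangleBlock s}

def blockGraph : SimpleGraph G.TriangleBlock where
  Adj s t := s ≠ t ∧ ∃ x ∈ s.1, ∃ y ∈ t.1, G.Adj x y
  symm := ⟨fun _ _ ⟨hne, x, hx, y, hy, h⟩ => ⟨hne.symm, y, hy, x, hx, h.symm⟩⟩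
  loopless := ⟨fun _ h => h.1 rfl⟩

variable {G} {s t : Finset V} {x x' y y' z : V}

theorem IsTriangleBlock.adj (hs : G.IsTriangleBlock s) (hx : x ∈ s) (hy : y ∈ s) (hxy : x ≠ y) :
    G.Adj x y :=
  hs.1.isClique hx hy hxy

theorem IsTriangleBlock.ne_of_adj_of_notMem (hs : G.IsTriangleBlock s) (hx : x ∈ s) (hy : y ∈ s)
    (hxy : x ≠ y) (hx' : x' ∉ s) (hxx' : G.Adj x x') (hyy' : G.Adj y y') : x' ≠ y' :=
  fun h => hxy (hs.2 x' hx' x hx y hy hxx'.symm (h ▸ hyy'.symm))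

variable [Fintype V] [DecidableRel G.Adj]

theorem IsTriangleBlock.eq_of_adj_of_notMem (hG : IsCubic G) (hs : G.IsTriangleBlock s)
    (hx : x ∈ s) (hy : y ∉ s) (hz : z ∉ s) (hxy : G.Adj x y) (hxz : G.Adj x z) : y = z := by
  classical
  by_contra hyz
  have hsub : insert y (insert z (s.erase x)) ⊆ G.neighborFinset x := by
    intro w
    simp only [mem_insert, mem_erase, mem_neighborFinset]
    rintro (rfl | rfl | ⟨hwx, hw⟩)
    · exact hxy
    · exact hxz
    · exact hs.adj hx hw (Ne.symm hwx)
  have := card_le_card hsub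
  rw [card_insert_of_notMem (by simp [hyz, hy]), card_insert_of_notMem (by simp [hz]),
    card_erase_of_mem hx, hs.1.card_eq, hG.card_neighborFinset] at this
  omega

theorem IsTriangleBlock.exists_adj_notMem (hG : IsCubic G) (hs : G.IsTriangleBlock s)
    (hx : x ∈ s) : ∃ y, G.Adj x y ∧ y ∉ s := by
  classical
  by_contra! h
  have hsub : G.neighborFinset x ⊆ s.erase x := fun y hy =>
    mem_erase.2 ⟨(G.ne_of_adj ((mem_neighborFinset ..).1 hy)).symm,
      h y ((mem_neighborFinset ..).1 hy)⟩
  have := card_le_card hsub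
  rw [card_erase_of_mem hx, hs.1.card_eq, hG.card_neighborFinset] at this
  omega

theorem IsTriangleBlock.eq_of_mem (hG : IsCubic G) (hs : G.IsTriangleBlock s)
    (ht : G.IsTriangleBlock t) (hxs : x ∈ s) (hxt : x ∈ t) : s = t := by
  classical
  have hN : ∀ {u}, G.IsTriangleBlock u → x ∈ u → u.erase x ⊆ G.neighborFinset x :=
    fun hu hxu y hy => (mem_neighborFinset ..).2
      (hu.adj hxu (mem_of_mem_erase hy) (ne_of_mem_erase hy).symm)
  -- two 2-subsets of the 3-set of neighbours of `x` meet
  obtain ⟨p, hp⟩ : (s.erase x ∩ t.erase x).Nonempty := by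
    rw [← card_pos]
    have := card_union_add_card_inter (s.erase x) (t.erase x)
    have := card_le_card (union_subset (hN hs hxs) (hN ht hxt))
    rw [card_erase_of_mem hxs, card_erase_of_mem hxt, hs.1.card_eq, ht.1.card_eq,
      hG.card_neighborFinset] at *
    omega
  simp only [mem_inter, mem_erase] at hp
  obtain ⟨⟨hpx, hps⟩, -, hpt⟩ := hp
  by_contra hst
  obtain ⟨q, hqt, hqs⟩ : ∃ q ∈ t, q ∉ s := by
    by_contra! h
    exact hst (eq_of_subset_of_card_le h (by rw [hs.1.card_eq, ht.1.card_eq])).symm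
  have hqx : q ≠ x := fun h => hqs (h ▸ hxs)
  have hqp : q ≠ p := fun h => hqs (h ▸ hps)
  exact hpx (hs.2 q hqs x hxs p hps (ht.adj hqt hxt hqx) (ht.adj hqt hpt hqp)).symm

theorem TriangleBlock.eq_of_mem (hG : IsCubic G) {s t : G.TriangleBlock} (hxs : x ∈ s.1)
    (hxt : x ∈ t.1) : s = t :=
  Subtype.ext (s.2.eq_of_mem hG t.2 hxs hxt)

theorem TriangleBlock.notMem_of_ne (hG : IsCubic G) {s t : G.TriangleBlock} (hst : s ≠ t)
    (hxs : x ∈ s.1) : x ∉ t.1 :=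
  fun hxt => hst (eq_of_mem hG hxs hxt)

section Hall

variable [DecidableEq V]

variable (G) in
def outerBoundary (s : Finset V) : Finset V := s.biUnion (fun x => G.neighborFinset x) \ s

theorem mem_outerBoundary : y ∈ G.outerBoundary s ↔ y ∉ s ∧ ∃ x ∈ s, G.Adj x y := by
  simp [outerBoundary, and_comm]

theorem IsTriangleBlock.three_le_card_outerBoundary (hG : IsCubic G) (hs : G.IsTriangleBlock s) :
    3 ≤ #(G.outerBoundary s) := by
  obtain ⟨a, b, c, hab, hac, hbc, rfl⟩ := is3Clique_iff.1 hs.1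
  obtain ⟨a', ha, ha'⟩ := hs.exists_adj_notMem hG (x := a) (by simp)
  obtain ⟨b', hb, hb'⟩ := hs.exists_adj_notMem hG (x := b) (by simp)
  obtain ⟨c', hc, hc'⟩ := hs.exists_adj_notMem hG (x := c) (by simp)
  calc 3 = #{a', b', c'} := by
        refine (card_eq_three.2 ⟨a', b', c', ?_, ?_, ?_, rfl⟩).symm
        · exact hs.ne_of_adj_of_notMem (by simp) (by simp) (G.ne_of_adj hab) ha' ha hb
        · exact hs.ne_of_adj_of_notMem (by simp) (by simp) (G.ne_of_adj hac) ha' ha hc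
        · exact hs.ne_of_adj_of_notMem (by simp) (by simp) (G.ne_of_adj hbc) hb' hb hc
    _ ≤ _ := by
        refine card_le_card fun y hy => mem_outerBoundary.2 ?_
        simp only [mem_insert, mem_singleton] at hy
        rcases hy with rfl | rfl | rfl
        · exact ⟨ha', a, by simp, ha⟩
        · exact ⟨hb', b, by simp, hb⟩
        · exact ⟨hc', c, by simp, hc⟩

theorem card_filter_mem_outerBoundary_le (hG : IsCubic G) (S : Finset G.TriangleBlock) (w : V) :
    #{s ∈ S | w ∈ G.outerBoundary s.1} ≤ 3 := by
  calc _ ≤ #(G.neighborFinset w) := by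
        refine card_le_card_of_forall_subsingleton (fun s x => x ∈ s.1) (fun s hs => ?_)
          fun x _ (s : G.TriangleBlock) hs (t : G.TriangleBlock) ht =>
            TriangleBlock.eq_of_mem hG hs.2 ht.2
        obtain ⟨-, x, hx, hxw⟩ := mem_outerBoundary.1 (mem_filter.1 hs).2
        exact ⟨x, (mem_neighborFinset ..).2 hxw.symm, hx⟩
    _ = 3 := hG.card_neighborFinset w

end Hall

/-- Hall's theorem: every block has three outside neighbours and every vertex is an outside
neighbour of at most three blocks. -/
theorem exists_injective_outsideNeighbor (hG : IsCubic G) :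
    ∃ f : G.TriangleBlock → V, Function.Injective f ∧
      ∀ s, f s ∉ s.1 ∧ ∃ x ∈ s.1, G.Adj x (f s) := by
  classical
  obtain ⟨f, hf, hfs⟩ := (all_card_le_biUnion_card_iff_exists_injective
    fun s : G.TriangleBlock => G.outerBoundary s.1).1 fun S => by
      have hm : ∀ s ∈ S, 3 ≤ #((S.biUnion fun s => G.outerBoundary s.1).bipartiteAbove
          (fun s w => w ∈ G.outerBoundary s.1) s) := fun s hs =>
        (s.2.three_le_card_outerBoundary hG).trans (card_le_card fun w hw =>
          (mem_bipartiteAbove _).2 ⟨mem_biUnion.2 ⟨s, hs, hw⟩, hw⟩)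
      have hn : ∀ w ∈ S.biUnion fun s => G.outerBoundary s.1,
          #(S.bipartiteBelow (fun s w => w ∈ G.outerBoundary s.1) w) ≤ 3 :=
        fun w _ => card_filter_mem_outerBoundary_le hG S w
      have := card_mul_le_card_mul _ hm hn
      omega
  exact ⟨f, hf, fun s => mem_outerBoundary.1 (hfs s)⟩

end TriangleBlock

section FourClique

variable {G : SimpleGraph V} [Fintype V] [DecidableRel G.Adj] {s t : Finset V} {u v x : V}

theorem IsNClique.eq_insert_neighborFinset [DecidableEq V] (hG : IsCubic G)
    (hs : G.IsNClique 4 s) (hv : v ∈ s) : s = insert v (G.neighborFinset v) := by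
  have : s.erase v = G.neighborFinset v :=
    eq_of_subset_of_card_le
      (fun y hy => (mem_neighborFinset ..).2
        (hs.isClique hv (mem_of_mem_erase hy) (ne_of_mem_erase hy).symm))
      (by rw [card_erase_of_mem hv, hs.card_eq, hG.card_neighborFinset])
  rw [← this, insert_erase hv]

theorem IsNClique.mem_of_adj (hG : IsCubic G) (hs : G.IsNClique 4 s) (hv : v ∈ s)
    (hvx : G.Adj v x) : x ∈ s := by
  classical
  rw [hs.eq_insert_neighborFinset hG hv]
  exact mem_insert_of_mem ((mem_neighborFinset ..).2 hvx)

theorem IsNClique.eq_of_mem (hG : IsCubic G) (hs : G.IsNClique 4 s) (ht : G.IsNClique 4 t)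
    (hvs : v ∈ s) (hvt : v ∈ t) : s = t := by
  classical
  rw [hs.eq_insert_neighborFinset hG hvs, ht.eq_insert_neighborFinset hG hvt]

theorem IsNClique.mem_of_edist_le_two (hG : IsCubic G) (hs : G.IsNClique 4 s) (hv : v ∈ s)
    (h : G.edist v x ≤ 2) : x ∈ s := by
  rcases G.edist_le_two_iff.1 h with rfl | hvx | ⟨w, hvw, hwx⟩
  · exact hv
  · exact hs.mem_of_adj hG hv hvx
  · exact hs.mem_of_adj hG (hs.mem_of_adj hG hv hvw) hwx

theorem IsNClique.two_lt_edist (hG : IsCubic G) (hs : G.IsNClique 4 s) (hu : u ∈ s)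
    (hv : v ∉ s) : 2 < G.edist u v :=
  lt_of_not_ge fun h => hv (hs.mem_of_edist_le_two hG hu h)

theorem IsTriangleBlock.notMem_of_isNClique_four (hG : IsCubic G) (ht : G.IsTriangleBlock t)
    (hs : G.IsNClique 4 s) (hx : x ∈ t) : x ∉ s := by
  intro hxs
  have hts : t ⊆ s := fun y hy => by
    rcases eq_or_ne x y with rfl | hxy
    · exact hxs
    · exact hs.mem_of_adj hG hxs (ht.adj hx hy hxy)
  obtain ⟨z, hzs, hzt⟩ := exists_of_ssubset
    (ssubset_of_subset_of_ne hts fun h => by simpa [h, hs.card_eq] using ht.1.card_eq)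
  obtain ⟨p, hp, q, hq, hpq⟩ := one_lt_card.1 (by rw [ht.1.card_eq]; omega)
  have hzp : z ≠ p := fun h => hzt (h ▸ hp)
  have hzq : z ≠ q := fun h => hzt (h ▸ hq)
  exact hpq (ht.2 z hzt p hp q hq (hs.isClique hzs (hts hp) hzp) (hs.isClique hzs (hts hq) hzq))

end FourClique

section Diamond

variable (G : SimpleGraph V)

/-- Not necessarily induced: `c` and `d` may be adjacent, as in a `K₄`. -/
structure IsDiamond (a b c d : V) : Prop where
  adj_ab : G.Adj a b
  adj_ac : G.Adj a c
  adj_ad : G.Adj a d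
  adj_bc : G.Adj b c
  adj_bd : G.Adj b d
  ne_cd : c ≠ d

def IsApex (a : V) : Prop := ∃ b c d, G.IsDiamond a b c d ∧ ¬ G.Adj c d

variable {G} {a b c d v x : V} {s T : Finset V}

theorem IsDiamond.symm (h : G.IsDiamond a b c d) : G.IsDiamond b a c d :=
  ⟨h.adj_ab.symm, h.adj_bc, h.adj_bd, h.adj_ac, h.adj_ad, h.ne_cd⟩

theorem IsDiamond.swap (h : G.IsDiamond a b c d) : G.IsDiamond a b d c :=
  ⟨h.adj_ab, h.adj_ad, h.adj_ac, h.adj_bd, h.adj_bc, h.ne_cd.symm⟩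

theorem IsNClique.isTriangleBlock_or (hT : G.IsNClique 3 T) :
    G.IsTriangleBlock T ∨ (∃ s, G.IsNClique 4 s ∧ T ⊆ s) ∨
      ∃ x ∈ T, ∃ y ∈ T, ∃ c d, G.IsDiamond x y c d ∧ ¬ G.Adj c d := by
  classical
  by_cases hB : G.IsTriangleBlock T
  · exact Or.inl hB
  simp only [IsTriangleBlock, hT, true_and, not_forall] at hB
  obtain ⟨z, hz, x, hx, y, hy, hzx, hzy, hxy⟩ := hB
  by_cases hK : ∀ t ∈ T, G.Adj z t
  · exact Or.inr (Or.inl ⟨insert z T, hT.insert hK, subset_insert _ _⟩)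
  obtain ⟨t, ht, hzt⟩ : ∃ t ∈ T, ¬ G.Adj z t := by simpa using hK
  have hxt : x ≠ t := fun h => hzt (h ▸ hzx)
  have hyt : y ≠ t := fun h => hzt (h ▸ hzy)
  refine Or.inr (Or.inr ⟨x, hx, y, hy, t, z, ⟨hT.isClique hx hy hxy, hT.isClique hx ht hxt,
    hzx.symm, hT.isClique hy ht hyt, hzy.symm, fun h => hz (h ▸ ht)⟩, fun h => hzt h.symm⟩)

variable [Fintype V] [DecidableRel G.Adj]

theorem IsDiamond.adj_iff (hG : IsCubic G) (h : G.IsDiamond a b c d) (x : V) :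
    G.Adj a x ↔ x = b ∨ x = c ∨ x = d :=
  hG.adj_iff h.adj_ab h.adj_ac h.adj_ad (G.ne_of_adj h.adj_bc) (G.ne_of_adj h.adj_bd) h.ne_cd x

theorem IsDiamond.exists_common_adj (hG : IsCubic G) (h : G.IsDiamond a b c d)
    (hx : G.Adj a x) : ∃ w, G.Adj a w ∧ G.Adj x w := by
  rcases (h.adj_iff hG x).1 hx with rfl | rfl | rfl
  · exact ⟨c, h.adj_ac, h.adj_bc⟩
  · exact ⟨b, h.adj_ab, h.adj_bc.symm⟩
  · exact ⟨b, h.adj_ab, h.adj_bd.symm⟩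

theorem IsDiamond.eq_of_adj_of_adj (hG : IsCubic G) (h : G.IsDiamond a b c d)
    (hcd : ¬ G.Adj c d) (hax : G.Adj a x) (hcx : G.Adj c x) : x = b := by
  rcases (h.adj_iff hG x).1 hax with rfl | rfl | rfl
  · rfl
  · exact absurd hcx G.irrefl
  · exact absurd hcx hcd

theorem IsDiamond.eq_or_eq_of_isTriangle (hG : IsCubic G) (h : G.IsDiamond a b c d)
    (hcd : ¬ G.Adj c d) (hT : IsTriangle G c v x) : v = a ∨ v = b := by
  obtain ⟨hcv, hcx, hvx⟩ := hT
  by_contra! hv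
  rcases (hG.adj_iff h.adj_ac.symm h.adj_bc.symm hcv (G.ne_of_adj h.adj_ab) hv.1.symm
    hv.2.symm x).1 hcx with rfl | rfl | rfl
  · exact hv.2 (h.eq_of_adj_of_adj hG hcd hvx.symm hcv)
  · exact hv.1 (h.symm.eq_of_adj_of_adj hG hcd hvx.symm hcv)
  · exact G.irrefl hvx

theorem IsDiamond.not_isApex_outer (hG : IsCubic G) (h : G.IsDiamond a b c d)
    (hcd : ¬ G.Adj c d) : ¬ G.IsApex c := by
  rintro ⟨b', c', d', h', -⟩
  obtain ⟨e, hce, hea, heb⟩ := hG.exists_adj_ne c a b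
  obtain ⟨w, hcw, hew⟩ := h'.exists_common_adj hG hce
  rcases h.eq_or_eq_of_isTriangle hG hcd ⟨hce, hcw, hew⟩ with rfl | rfl
  exacts [hea rfl, heb rfl]

theorem IsDiamond.eq_or_eq_of_isApex_of_adj (hG : IsCubic G) (h : G.IsDiamond a b c d)
    (hcd : ¬ G.Adj c d) (hv : G.IsApex v) (hcv : G.Adj c v) : v = a ∨ v = b := by
  obtain ⟨b', c', d', h', -⟩ := hv
  obtain ⟨w, hvw, hcw⟩ := h'.exists_common_adj hG hcv.symm
  exact h.eq_or_eq_of_isTriangle hG hcd ⟨hcv, hcw, hvw⟩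

theorem IsDiamond.edist_le_two (hG : IsCubic G) (h : G.IsDiamond a b c d)
    (hx : G.edist a x ≤ 2) : x = a ∨ x = b ∨ x = c ∨ x = d ∨ G.Adj c x ∨ G.Adj d x := by
  rcases G.edist_le_two_iff.1 hx with rfl | hax | ⟨w, haw, hwx⟩
  · exact Or.inl rfl
  · rcases (h.adj_iff hG x).1 hax with rfl | rfl | rfl <;> simp
  · rcases (h.adj_iff hG w).1 haw with rfl | rfl | rfl
    · rcases (h.symm.adj_iff hG x).1 hwx with rfl | rfl | rfl <;> simp
    · simp [hwx]
    · simp [hwx]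

theorem IsDiamond.eq_or_eq_of_isApex_of_edist_le_two (hG : IsCubic G)
    (h : G.IsDiamond a b c d) (hcd : ¬ G.Adj c d) (hv : G.IsApex v) (hav : G.edist a v ≤ 2) :
    v = a ∨ v = b := by
  have hdc : ¬ G.Adj d c := fun h => hcd h.symm
  rcases h.edist_le_two hG hav with hva | hvb | rfl | rfl | hcv | hdv
  · exact Or.inl hva
  · exact Or.inr hvb
  · exact absurd hv (h.not_isApex_outer hG hcd)
  · exact absurd hv (h.swap.not_isApex_outer hG hdc)
  · exact h.eq_or_eq_of_isApex_of_adj hG hcd hv hcv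
  · exact h.swap.eq_or_eq_of_isApex_of_adj hG hdc hv hdv

theorem IsDiamond.apex_notMem (hG : IsCubic G) (h : G.IsDiamond a b c d)
    (hs : G.IsTriangleBlock s) : a ∉ s := by
  classical
  intro ha
  by_cases hb : b ∈ s
  · have hc : c ∈ s := by_contra fun hc =>
      G.ne_of_adj h.adj_ab (hs.2 c hc a ha b hb h.adj_ac.symm h.adj_bc.symm)
    have hd : d ∈ s := by_contra fun hd =>
      G.ne_of_adj h.adj_ab (hs.2 d hd a ha b hb h.adj_ad.symm h.adj_bd.symm)
    have := card_le_card (s := {a, b, c, d}) (t := s) (by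
      intro y
      simp only [mem_insert, mem_singleton]
      rintro (rfl | rfl | rfl | rfl) <;> assumption)
    rw [hs.1.card_eq, card_insert_of_notMem, card_insert_of_notMem, card_pair h.ne_cd] at this
    · omega
    · simp [G.ne_of_adj h.adj_bc, G.ne_of_adj h.adj_bd]
    · simp [G.ne_of_adj h.adj_ab, G.ne_of_adj h.adj_ac, G.ne_of_adj h.adj_ad]
  · have hc : c ∈ s := by_contra fun hc =>
      G.ne_of_adj h.adj_bc (hs.eq_of_adj_of_notMem hG ha hb hc h.adj_ab h.adj_ac)
    have hd : d ∈ s := by_contra fun hd =>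
      G.ne_of_adj h.adj_bd (hs.eq_of_adj_of_notMem hG ha hb hd h.adj_ab h.adj_ad)
    exact h.ne_cd (hs.2 b hb c hc d hd h.adj_bc h.adj_bd)

theorem IsDiamond.outer_notMem (hG : IsCubic G) (h : G.IsDiamond a b c d)
    (hs : G.IsTriangleBlock s) : c ∉ s := by
  intro hc
  by_cases ha : a ∈ s
  · exact h.apex_notMem hG hs ha
  by_cases hb : b ∈ s
  · exact h.symm.apex_notMem hG hs hb
  exact G.ne_of_adj h.adj_ab (hs.eq_of_adj_of_notMem hG hc ha hb h.adj_ac.symm h.adj_bc.symm)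

theorem IsApex.notMem_of_isTriangleBlock (hG : IsCubic G) (ha : G.IsApex a)
    (hs : G.IsTriangleBlock s) : a ∉ s :=
  let ⟨_, _, _, h, _⟩ := ha
  h.apex_notMem hG hs

theorem IsApex.notMem_of_isNClique_four (hG : IsCubic G) (ha : G.IsApex a)
    (hs : G.IsNClique 4 s) : a ∉ s := fun has =>
  let ⟨_, _, _, h, hcd⟩ := ha
  hcd (hs.isClique (hs.mem_of_adj hG has h.adj_ac) (hs.mem_of_adj hG has h.adj_ad) h.ne_cd)

theorem IsApex.two_lt_edist (hG : IsCubic G) (ha : G.IsApex a) (hs : G.IsTriangleBlock s)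
    (hx : x ∈ s) (hN : ∀ y, G.Adj x y → ∃ t, G.IsTriangleBlock t ∧ y ∈ t) :
    2 < G.edist a x := by
  obtain ⟨b, c, d, h, -⟩ := ha
  refine lt_of_not_ge fun hax => ?_
  rcases h.edist_le_two hG hax with rfl | rfl | rfl | rfl | hcx | hdx
  · exact h.apex_notMem hG hs hx
  · exact h.symm.apex_notMem hG hs hx
  · exact h.outer_notMem hG hs hx
  · exact h.swap.outer_notMem hG hs hx
  · obtain ⟨t, ht, hct⟩ := hN c hcx.symm
    exact h.outer_notMem hG ht hct
  · obtain ⟨t, ht, hdt⟩ := hN d hdx.symm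
    exact h.swap.outer_notMem hG ht hdt

end Diamond

section BlockChoice

variable (G : SimpleGraph V)

/-- A vertex `rep s` of every triangle block `s`, to be put into `X` or `Y` according to
`colour s`. The conditions on its outside neighbour `out s` keep representatives of equal colour
at distance greater than two; the last one keeps those put into `X` away from diamond apexes. -/
structure BlockChoice where
  rep : G.TriangleBlock → V
  out : G.TriangleBlock → V
  colour : G.TriangleBlock → Bool
  rep_mem : ∀ s, rep s ∈ s.1
  adj_out : ∀ s, G.Adj (rep s) (out s)
  out_notMem : ∀ s, out s ∉ s.1
  out_notMem_of_colour_eq : ∀ {s t}, s ≠ t → colour s = colour t → out s ∉ t.1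
  eq_of_out_eq : ∀ {s t}, colour s = colour t → out s = out t → s = t
  exists_out_mem : ∀ {s}, colour s = true → ∃ t : G.TriangleBlock, out s ∈ t.1

variable {G} [Fintype V] [DecidableRel G.Adj] (B : G.BlockChoice) {s t : G.TriangleBlock}

theorem BlockChoice.adj_rep (hG : IsCubic G) {y : V} (hy : G.Adj (B.rep s) y) :
    y ∈ s.1 ∨ y = B.out s := by
  by_cases h : y ∈ s.1
  · exact Or.inl h
  · exact Or.inr (s.2.eq_of_adj_of_notMem hG (B.rep_mem s) h (B.out_notMem s) hy (B.adj_out s))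

theorem BlockChoice.two_lt_edist (hG : IsCubic G) (hst : s ≠ t) (hc : B.colour s = B.colour t) :
    2 < G.edist (B.rep s) (B.rep t) := by
  have hdisj : ∀ {x}, x ∈ s.1 → x ∉ t.1 := TriangleBlock.notMem_of_ne hG hst
  refine lt_of_not_ge fun h => ?_
  rcases G.edist_le_two_iff.1 h with heq | hadj | ⟨w, hsw, hwt⟩
  · exact hdisj (B.rep_mem s) (heq ▸ B.rep_mem t)
  · rcases B.adj_rep hG hadj with h' | h'
    · exact hdisj h' (B.rep_mem t)
    · exact B.out_notMem_of_colour_eq hst hc (h' ▸ B.rep_mem t)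
  · rcases B.adj_rep hG hsw with hws | rfl <;> rcases B.adj_rep hG hwt.symm with hwt' | hwt'
    · exact hdisj hws hwt'
    · exact B.out_notMem_of_colour_eq hst.symm hc.symm (hwt' ▸ hws)
    · exact B.out_notMem_of_colour_eq hst hc hwt'
    · exact hst (B.eq_of_out_eq hc hwt')

theorem exists_rep_out (hG : IsCubic G) {c : G.TriangleBlock → Bool}
    (hc : ∀ s t, G.blockGraph.Adj s t → ∃ u, G.blockGraph.Adj s u ∧ c u ≠ c s)
    {f : G.TriangleBlock → V} (hf : ∀ s, f s ∉ s.1 ∧ ∃ x ∈ s.1, G.Adj x (f s)) :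
    ∃ r o : G.TriangleBlock → V, (∀ s, r s ∈ s.1 ∧ G.Adj (r s) (o s) ∧ o s ∉ s.1) ∧
      (∀ s, (∃ t, G.blockGraph.Adj s t) → ∃ t : G.TriangleBlock, o s ∈ t.1 ∧ c t ≠ c s) ∧
      ∀ s, (¬ ∃ t, G.blockGraph.Adj s t) → o s = f s := by
  have key : ∀ s : G.TriangleBlock, ∃ x y, x ∈ s.1 ∧ G.Adj x y ∧ y ∉ s.1 ∧
      ((∃ t, G.blockGraph.Adj s t) → ∃ t : G.TriangleBlock, y ∈ t.1 ∧ c t ≠ c s) ∧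
      ((¬ ∃ t, G.blockGraph.Adj s t) → y = f s) := by
    intro s
    by_cases hs : ∃ t, G.blockGraph.Adj s t
    · obtain ⟨t, ⟨hne, x, hx, y, hy, hxy⟩, hct⟩ := hc _ _ hs.choose_spec
      exact ⟨x, y, hx, hxy, TriangleBlock.notMem_of_ne hG hne.symm hy, fun _ => ⟨t, hy, hct⟩,
        absurd hs⟩
    · obtain ⟨hfs, x, hx, hxf⟩ := hf s
      exact ⟨x, f s, hx, hxf, hfs, fun h => absurd h hs, fun _ => rfl⟩
  choose r o hr hro ho hN hI using key
  exact ⟨r, o, fun s => ⟨hr s, hro s, ho s⟩, hN, hI⟩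

theorem exists_blockChoice (hG : IsCubic G) : Nonempty G.BlockChoice := by
  classical
  obtain ⟨c, hc⟩ := G.blockGraph.exists_bool_coloring_exists_adj_ne
  obtain ⟨f, hf, hfs⟩ := exists_injective_outsideNeighbor hG
  obtain ⟨r, o, hro, hN, hI⟩ := exists_rep_out hG hc hfs
  have hadj : ∀ {s t}, o s ∈ t.1 → G.blockGraph.Adj s t := fun h =>
    ⟨fun hst => (hro _).2.2 (hst ▸ h), r _, (hro _).1, o _, h, (hro _).2.1⟩
  refine ⟨{
    rep := r
    out := o
    colour s := if ∃ t, G.blockGraph.Adj s t then c s else false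
    rep_mem s := (hro s).1
    adj_out s := (hro s).2.1
    out_notMem s := (hro s).2.2
    out_notMem_of_colour_eq := ?_
    eq_of_out_eq := ?_
    exists_out_mem := ?_ }⟩
  · intro s t _ hκ hst
    have h := hadj hst
    obtain ⟨u, hu, hcu⟩ := hN s ⟨t, h⟩
    simp only [show ∃ u, G.blockGraph.Adj s u from ⟨t, h⟩,
      show ∃ u, G.blockGraph.Adj t u from ⟨s, h.symm⟩, if_true] at hκ
    exact hcu (TriangleBlock.eq_of_mem hG hu hst ▸ hκ.symm)
  · intro s t _ hst
    by_cases hs : ∃ u, G.blockGraph.Adj s u <;> by_cases ht : ∃ u, G.blockGraph.Adj t u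
    · -- `out s = out t` lies in a block, where it has only one outside neighbour
      obtain ⟨u, hu, -⟩ := hN s hs
      have hrs := TriangleBlock.notMem_of_ne hG (hadj hu).1 (hro s).1
      have hrt := TriangleBlock.notMem_of_ne hG (hadj (hst ▸ hu)).1 (hro t).1
      have := u.2.eq_of_adj_of_notMem hG hu hrs hrt (hro s).2.1.symm (hst ▸ (hro t).2.1.symm)
      exact TriangleBlock.eq_of_mem hG (hro s).1 (this ▸ (hro t).1)
    · obtain ⟨u, hu, -⟩ := hN s hs
      exact absurd ⟨u, hadj (hst ▸ hu)⟩ ht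
    · obtain ⟨u, hu, -⟩ := hN t ht
      exact absurd ⟨u, hadj (hst ▸ hu)⟩ hs
    · exact hf (by rw [← hI s hs, ← hI t ht, hst])
  · intro s hs
    obtain ⟨t, ht, -⟩ := hN s (by_contra fun h => by simp [h] at hs)
    exact ⟨t, ht⟩

end BlockChoice

section Packing

variable (G : SimpleGraph V)

def cliqueExtremal (r : V → V → Prop) : Set V :=
  {v | ∃ s, G.IsNClique 4 s ∧ v ∈ s ∧ ∀ u ∈ s, r v u}

def lowApexes [LT V] : Set V := {v | G.IsApex v ∧ ∀ w, G.Adj v w → G.IsApex w → v < w}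

variable {G} {s T : Finset V} {a b c d : V}

theorem IsNClique.exists_mem_cliqueExtremal [LinearOrder V] (hs : G.IsNClique 4 s) (hT : T ⊆ s)
    (hTc : #T = 3) : ∃ w ∈ T, w ∈ G.cliqueExtremal (· ≤ ·) ∪ G.cliqueExtremal (· ≥ ·) := by
  classical
  have hne : s.Nonempty := card_pos.1 (by rw [hs.card_eq]; norm_num)
  by_cases hmin : s.min' hne ∈ T
  · exact ⟨_, hmin, Or.inl ⟨s, hs, s.min'_mem hne, fun u hu => s.min'_le u hu⟩⟩
  by_cases hmax : s.max' hne ∈ T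
  · exact ⟨_, hmax, Or.inr ⟨s, hs, s.max'_mem hne, fun u hu => s.le_max' u hu⟩⟩
  -- otherwise the minimum and the maximum are both the vertex of `s` outside `T`
  have hsT : #(s \ T) ≤ 1 := by rw [card_sdiff_of_subset hT, hs.card_eq, hTc]
  have := card_le_one.1 hsT _ (mem_sdiff.2 ⟨s.min'_mem hne, hmin⟩) _
    (mem_sdiff.2 ⟨s.max'_mem hne, hmax⟩)
  exact absurd this (s.min'_lt_max'_of_card (by rw [hs.card_eq]; norm_num)).ne

variable [Fintype V] [DecidableRel G.Adj]

theorem twoPacking_cliqueExtremal (hG : IsCubic G) {r : V → V → Prop}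
    (hr : ∀ u v, r u v → r v u → u = v) : TwoPacking G (G.cliqueExtremal r) := by
  rintro u ⟨s, hs, hus, hu⟩ v ⟨t, ht, hvt, hv⟩ huv
  refine lt_of_not_ge fun h => huv ?_
  have hvs := hs.mem_of_edist_le_two hG hus h
  obtain rfl := hs.eq_of_mem hG ht hvs hvt
  exact hr u v (hu v hvs) (hv u hus)

theorem disjoint_cliqueExtremal [PartialOrder V] (hG : IsCubic G) :
    Disjoint (G.cliqueExtremal (· ≤ ·)) (G.cliqueExtremal (· ≥ ·)) := by
  refine Set.disjoint_left.2 ?_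
  rintro v ⟨s, hs, hvs, hv⟩ ⟨t, ht, hvt, hv'⟩
  obtain rfl := hs.eq_of_mem hG ht hvs hvt
  obtain ⟨u, hu, huv⟩ := exists_mem_ne (by rw [hs.card_eq]; norm_num) v
  exact huv ((hv' u hu).antisymm (hv u hu))

theorem twoPacking_lowApexes [Preorder V] (hG : IsCubic G) : TwoPacking G G.lowApexes := by
  rintro u ⟨⟨b, c, d, h, hcd⟩, hu⟩ v ⟨hv, hv'⟩ huv
  refine lt_of_not_ge fun huv' => ?_
  rcases h.eq_or_eq_of_isApex_of_edist_le_two hG hcd hv huv' with rfl | rfl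
  · exact huv rfl
  · exact lt_asymm (hu _ h.adj_ab hv) (hv' u h.adj_ab.symm ⟨_, c, d, h, hcd⟩)

theorem IsDiamond.mem_lowApexes [Preorder V] (hG : IsCubic G) (h : G.IsDiamond a b c d)
    (hcd : ¬ G.Adj c d) (hab : a < b) : a ∈ G.lowApexes := by
  refine ⟨⟨b, c, d, h, hcd⟩, fun w haw hw => ?_⟩
  rcases h.eq_or_eq_of_isApex_of_edist_le_two hG hcd hw
    (G.edist_le_two_iff.2 (Or.inr (Or.inl haw))) with rfl | rfl
  · exact absurd haw G.irrefl
  · exact hab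

namespace BlockChoice

variable (B : G.BlockChoice)

theorem twoPacking_rep_image (hG : IsCubic G) (κ : Bool) :
    TwoPacking G (B.rep '' {s | B.colour s = κ}) := by
  rintro _ ⟨s, hs, rfl⟩ _ ⟨t, ht, rfl⟩ hst
  exact B.two_lt_edist hG (fun h => hst (h ▸ rfl)) (hs.trans ht.symm)

variable [LinearOrder V]

def X : Set V := G.cliqueExtremal (· ≤ ·) ∪ G.lowApexes ∪ B.rep '' {s | B.colour s = true}

def Y : Set V := G.cliqueExtremal (· ≥ ·) ∪ B.rep '' {s | B.colour s = false}

theorem twoPacking_X (hG : IsCubic G) : TwoPacking G B.X := by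
  refine .union (.union (twoPacking_cliqueExtremal hG fun _ _ => le_antisymm)
    (twoPacking_lowApexes hG) ?_) (B.twoPacking_rep_image hG true) ?_
  · rintro u ⟨s, hs, hus, -⟩ v hv
    exact hs.two_lt_edist hG hus (hv.1.notMem_of_isNClique_four hG hs)
  · rintro u (⟨s, hs, hus, -⟩ | hu) _ ⟨t, ht, rfl⟩
    · exact hs.two_lt_edist hG hus (t.2.notMem_of_isNClique_four hG hs (B.rep_mem t))
    · refine hu.1.two_lt_edist hG t.2 (B.rep_mem t) fun y hy => ?_
      rcases B.adj_rep hG hy with hyt | rfl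
      · exact ⟨t, t.2, hyt⟩
      · obtain ⟨t', ht'⟩ := B.exists_out_mem ht
        exact ⟨t', t'.2, ht'⟩

theorem twoPacking_Y (hG : IsCubic G) : TwoPacking G B.Y := by
  refine .union (twoPacking_cliqueExtremal hG fun _ _ h h' => le_antisymm h' h)
    (B.twoPacking_rep_image hG false) ?_
  rintro u ⟨s, hs, hus, -⟩ _ ⟨t, -, rfl⟩
  exact hs.two_lt_edist hG hus (t.2.notMem_of_isNClique_four hG hs (B.rep_mem t))

theorem disjoint_X_Y (hG : IsCubic G) : Disjoint B.X B.Y := by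
  refine Set.disjoint_left.2 ?_
  rintro v ((hv | hv) | ⟨s, hs, rfl⟩) (hv' | ⟨t, ht, htv⟩)
  · exact Set.disjoint_left.1 (disjoint_cliqueExtremal hG) hv hv'
  · obtain ⟨s, hs, hvs, -⟩ := hv
    exact t.2.notMem_of_isNClique_four hG hs (htv ▸ B.rep_mem t) hvs
  · obtain ⟨s, hs, hvs, -⟩ := hv'
    exact hv.1.notMem_of_isNClique_four hG hs hvs
  · exact hv.1.notMem_of_isTriangleBlock hG t.2 (htv ▸ B.rep_mem t)
  · obtain ⟨t, ht, hvt, -⟩ := hv'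
    exact s.2.notMem_of_isNClique_four hG ht (B.rep_mem s) hvt
  · obtain rfl := TriangleBlock.eq_of_mem hG (B.rep_mem t) (htv ▸ B.rep_mem s)
    exact Bool.noConfusion ((Eq.symm hs).trans ht)

theorem exists_mem_X_union_Y (hG : IsCubic G) (hT : G.IsNClique 3 T) :
    ∃ w ∈ T, w ∈ B.X ∪ B.Y := by
  rcases hT.isTriangleBlock_or with hB | ⟨s, hs, hTs⟩ | ⟨x, hx, y, hy, c, d, h, hcd⟩
  · refine ⟨B.rep ⟨T, hB⟩, B.rep_mem _, ?_⟩
    cases hκ : B.colour ⟨T, hB⟩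
    · exact Or.inr (Or.inr ⟨_, hκ, rfl⟩)
    · exact Or.inl (Or.inr ⟨_, hκ, rfl⟩)
  · obtain ⟨w, hw, hw' | hw'⟩ := hs.exists_mem_cliqueExtremal hTs hT.card_eq
    · exact ⟨w, hw, Or.inl (Or.inl (Or.inl hw'))⟩
    · exact ⟨w, hw, Or.inr (Or.inl hw')⟩
  · rcases lt_or_gt_of_ne (G.ne_of_adj h.adj_ab) with hxy | hxy
    · exact ⟨x, hx, Or.inl (Or.inl (Or.inr (h.mem_lowApexes hG hcd hxy)))⟩
    · exact ⟨y, hy, Or.inl (Or.inl (Or.inr (h.symm.mem_lowApexes hG hcd hxy)))⟩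

end BlockChoice

end Packing

end SimpleGraph

theorem stmt_1 {V : Type*} [Fintype V] (G : SimpleGraph V) [DecidableRel G.Adj]
    (hcubic : IsCubic G) :
    ∃ X Y : Set V, Disjoint X Y ∧ TwoPacking G X ∧ TwoPacking G Y ∧
      ∀ a b c : V, a ∉ X ∪ Y → b ∉ X ∪ Y → c ∉ X ∪ Y → ¬ IsTriangle G a b c := by
  classical
  let _ : LinearOrder V := LinearOrder.lift' _ (Fintype.equivFin V).injective
  obtain ⟨B⟩ := exists_blockChoice hcubic
  refine ⟨B.X, B.Y, B.disjoint_X_Y hcubic, B.twoPacking_X hcubic, B.twoPacking_Y hcubic, ?_⟩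
  intro a b c ha hb hc hT
  obtain ⟨w, hw, hwXY⟩ := B.exists_mem_X_union_Y hcubic (is3Clique_triple_iff.2 hT)
  simp only [mem_insert, mem_singleton] at hw
  rcases hw with rfl | rfl | rfl <;> contradiction
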